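/- Let G be a quasi-acyclic 2-path-bounded oriented graph without multiple edges and without triangles. Then η(G) ≥ 𝔯𝔥(G) + 𝔏(G). -/

import Mathlib

/-- An oriented graph: finite nonempty sets of vertices and edges with
origin and tail maps. -/
structure OrientedGraph where
  V : Type
  E : Type
  [fintypeV : Fintype V]
  [fintypeE : Fintype E]
  [nonemptyV : Nonempty V]
  [nonemptyE : Nonempty E]
  o : E → V
  t : E → V

attribute [instance] OrientedGraph.fintypeV OrientedGraph.fintypeE
  OrientedGraph.nonemptyV OrientedGraph.nonemptyE

namespace OrientedGraph

variable (G : OrientedGraph)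

/-- `G.IsPath p u v` : the edge sequence `p` is a path from `u` to `v`
(consecutive edges are composable; paths of length 0 at any vertex are allowed). -/
def IsPath (p : List G.E) (u v : G.V) : Prop :=
  List.Chain' (fun e f => G.t e = G.o f) p ∧
  ((p = [] ∧ u = v) ∨
    ∃ h : p ≠ [], u = G.o (p.head h) ∧ v = G.t (p.getLast h))

/-- The label of an edge sequence: the product of the labels of its edges
(the empty sequence maps to `1`). -/
def labelProd {M : Type} [Monoid M] (l : G.E → M) (s : List G.E) : M :=
  (s.map l).prod

/-- The diagram `(G, l)` is commutative: any two paths with the same origin and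
the same tail have equal labels. -/
def IsCommutative {M : Type} [Monoid M] (l : G.E → M) : Prop :=
  ∀ (u v : G.V) (p₁ p₂ : List G.E),
    G.IsPath p₁ u v → G.IsPath p₂ u v → G.labelProd l p₁ = G.labelProd l p₂

/-- A complete system of relations for `G`: for every monoid `M` and every
labeling `l : E → M`, the diagram `(G, l)` is commutative iff all relations hold. -/
def IsComplete (R : Finset (List G.E × List G.E)) : Prop :=
  ∀ (M : Type) [Monoid M], ∀ l : G.E → M,
    G.IsCommutative l ↔ ∀ r ∈ R, G.labelProd l r.1 = G.labelProd l r.2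

/-- A minimal complete system of relations: no proper subset is complete. -/
def IsMinimalComplete (R : Finset (List G.E × List G.E)) : Prop :=
  G.IsComplete R ∧ ∀ R' : Finset (List G.E × List G.E), R' ⊂ R → ¬ G.IsComplete R'

/-- The commutativity rank `η(G)`: the minimal cardinality of a complete
system of relations for `G`. -/
noncomputable def eta : ℕ :=
  sInf {n : ℕ | ∃ R : Finset (List G.E × List G.E), G.IsComplete R ∧ R.card = n}

/-- `S'` is obtained from `S` by one multiplication. -/
def MulStep (S S' : Set (List G.E)) : Prop :=
  ∃ s ∈ S, ∃ s' ∈ S, S' = S ∪ {s ++ s'}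

/-- `G.mCost S S'` : the minimal number of multiplications needed to obtain `S'`
from `S` (`⊤` if impossible). -/
noncomputable def mCost (S S' : Set (List G.E)) : ℕ∞ :=
  sInf {k : ℕ∞ | ∃ n : ℕ, k = n ∧ ∃ f : ℕ → Set (List G.E),
    f 0 = S ∧ f n = S' ∧ ∀ i < n, G.MulStep (f i) (f (i + 1))}

/-- `S_R`: the set of all edge sequences appearing in the relations of `R`. -/
def relSet (R : Finset (List G.E × List G.E)) : Set (List G.E) :=
  {s | ∃ r ∈ R, s = r.1 ∨ s = r.2}

/-- `ℰ`: the empty sequence together with all one-edge sequences. -/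
def baseSet : Set (List G.E) :=
  {s | s = [] ∨ ∃ e : G.E, s = [e]}

/-- `m(R)`: the minimal number of multiplications needed to build all sequences
appearing in `R`, starting from `ℰ`. -/
noncomputable def mRel (R : Finset (List G.E × List G.E)) : ℕ∞ :=
  sInf {k : ℕ∞ | ∃ S : Set (List G.E), G.relSet R ⊆ S ∧ k = G.mCost G.baseSet S}

/-- The multiplication rank `ν(G)`. -/
noncomputable def nu : ℕ∞ :=
  sInf {k : ℕ∞ | ∃ R : Finset (List G.E × List G.E), G.IsComplete R ∧ k = G.mRel R}

/-- A 4-tuple of edges `(a, b, c, d)` forms a rhomboid. -/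
def IsRhomboid (r : G.E × G.E × G.E × G.E) : Prop :=
  G.o r.1 = G.o r.2.2.1 ∧ G.t r.2.1 = G.t r.2.2.2 ∧
  G.t r.1 = G.o r.2.1 ∧ G.t r.2.2.1 = G.o r.2.2.2 ∧
  G.o r.1 ≠ G.t r.1 ∧ G.o r.1 ≠ G.o r.2.2.2 ∧ G.o r.1 ≠ G.t r.2.2.2 ∧
  G.t r.1 ≠ G.o r.2.2.2 ∧ G.t r.1 ≠ G.t r.2.2.2 ∧ G.o r.2.2.2 ≠ G.t r.2.2.2

/-- Two rhomboids `(a, b, c, d)` and `(a', b', c', d')` are disjoint. -/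
def RhDisjoint (r r' : G.E × G.E × G.E × G.E) : Prop :=
  (r.1 ≠ r'.1 ∨ r.2.1 ≠ r'.2.1) ∧
  (r.1 ≠ r'.2.2.1 ∨ r.2.1 ≠ r'.2.2.2) ∧
  (r.2.2.1 ≠ r'.2.2.1 ∨ r.2.2.2 ≠ r'.2.2.2) ∧
  (r.2.2.1 ≠ r'.1 ∨ r.2.2.2 ≠ r'.2.1)

/-- `𝔯𝔥(G)`: the maximal cardinality of a family of pairwise disjoint rhomboids in `G`. -/
noncomputable def rhNum : ℕ :=
  sSup {n : ℕ | ∃ F : Finset (G.E × G.E × G.E × G.E),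
    (∀ r ∈ F, G.IsRhomboid r) ∧
    (∀ r ∈ F, ∀ r' ∈ F, r ≠ r' → G.RhDisjoint r r') ∧ F.card = n}

/-- `𝔏(G)`: the number of loops of `G`. -/
noncomputable def loopCount : ℕ :=
  Nat.card {e : G.E // G.o e = G.t e}

/-- `G` is quasi-acyclic: no directed cycle visiting two or more distinct vertices. -/
def QuasiAcyclic : Prop :=
  ∀ u v : G.V, u ≠ v →
    ∀ p q : List G.E, G.IsPath p u v → G.IsPath q v u → False

/-- `G` is 2-path-bounded: every oriented path avoiding loop edges has length at most 2. -/
def TwoPathBounded : Prop :=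
  ∀ (p : List G.E) (u v : G.V), G.IsPath p u v →
    (∀ e ∈ p, G.o e ≠ G.t e) → p.length ≤ 2

/-- `G` has a pair of multiple edges. -/
def HasMultipleEdges : Prop :=
  ∃ e e' : G.E, e ≠ e' ∧ G.t e = G.t e' ∧ G.o e = G.o e' ∧ G.t e ≠ G.o e

/-- `G` has a triangle. -/
def HasTriangle : Prop :=
  ∃ a b c : G.E, G.o a = G.o b ∧ G.t b = G.o c ∧ G.t c = G.t a ∧
    G.o a ≠ G.t a ∧ G.o b ≠ G.t b ∧ G.o c ≠ G.t c

/-- `G` has no loops. -/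
def NoLoops : Prop := ∀ e : G.E, G.o e ≠ G.t e

/-- Every edge occurring on either side of the relation `r` is a loop. -/
def AllLoops (r : List G.E × List G.E) : Prop :=
  (∀ e ∈ r.1, G.o e = G.t e) ∧ (∀ e ∈ r.2, G.o e = G.t e)

/-- Both sides of the relation `r` contain at least one non-loop edge. -/
def BothSidesNonLoop (r : List G.E × List G.E) : Prop :=
  (∃ e ∈ r.1, G.o e ≠ G.t e) ∧ (∃ e ∈ r.2, G.o e ≠ G.t e)

end OrientedGraph

/-- The triploid `T(n₁, n₂, n₃, n₀, e)`. -/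
def Triploid (n₁ n₂ n₃ n₀ e : ℕ) (hn₁ : 0 < n₁) (he : n₂ * (n₁ + n₃) ≤ e)
    (he₀ : 0 < e) : OrientedGraph where
  V := Fin n₀ ⊕ Fin n₁ ⊕ Fin n₂ ⊕ Fin n₃
  E := (Fin n₁ × Fin n₂) ⊕ (Fin n₂ × Fin n₃) ⊕ Fin (e - n₂ * (n₁ + n₃))
  nonemptyV := ⟨Sum.inr (Sum.inl ⟨0, hn₁⟩)⟩
  nonemptyE := by
    by_cases h : n₂ * (n₁ + n₃) < e
    · exact ⟨Sum.inr (Sum.inr ⟨0, by omega⟩)⟩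
    · have h2 : 0 < n₂ := by
        rcases Nat.eq_zero_or_pos n₂ with h0 | h0
        · exfalso; subst h0; simp at h; omega
        · exact h0
      exact ⟨Sum.inl (⟨0, hn₁⟩, ⟨0, h2⟩)⟩
  o := Sum.elim (fun p => Sum.inr (Sum.inl p.1))
        (Sum.elim (fun p => Sum.inr (Sum.inr (Sum.inl p.1)))
          (fun _ => Sum.inr (Sum.inl ⟨0, hn₁⟩)))
  t := Sum.elim (fun p => Sum.inr (Sum.inr (Sum.inl p.2)))
        (Sum.elim (fun p => Sum.inr (Sum.inr (Sum.inr p.2)))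
          (fun _ => Sum.inr (Sum.inl ⟨0, hn₁⟩)))

/-!
Under the hypotheses, deleting the loops from a path leaves the empty path, a single edge, or a
path of length two, and two parallel paths can differ only in the last case. Hence a labelling
is commutative iff it sends loops to `1` and any two parallel loop-free paths of length two to
the same element; in particular complete systems exist and `η(G)` is attained.

The lower bound comes from test labellings that are commutative exactly when some linear or
combinatorial condition holds. Weighting loops by rationals (and sending every other edge to the
absorbing `0`) shows that the relations of a complete system built from loops alone determine all
loop weights, so there are at least `𝔏(G)` of them. Colouring paths of length two in a monoid of
words of length at most two shows that, for fixed end vertices `u`, `v`, the relations between two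
such paths from `u` to `v` connect all of them, so there are at least their number minus one; the
sides of pairwise disjoint rhomboids with corners `u`, `v` are distinct such paths, two for each
rhomboid.
-/

-- `hconn` says that the graph on `S` with edge list `T` is connected.
theorem Finset.card_le_card_add_one_of_forall_iff {α : Type*} {S : Finset α}
    {T : Finset (α × α)} (hT : T ⊆ S ×ˢ S)
    (hconn : ∀ P : α → Prop, (∀ e ∈ T, P e.1 ↔ P e.2) → ∀ a ∈ S, ∀ b ∈ S, P a → P b) :
    S.card ≤ T.card + 1 := by
  rcases S.eq_empty_or_nonempty with rfl | ⟨a₀, ha₀⟩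
  · simp
  let H : SimpleGraph S := SimpleGraph.fromRel fun a b => (a.1, b.1) ∈ T
  have : Nonempty S := ⟨⟨a₀, ha₀⟩⟩
  have hH : H.Connected := by
    refine H.connected_iff_exists_forall_reachable.2 ⟨⟨a₀, ha₀⟩, fun b => ?_⟩
    refine (hconn (fun x => ∃ hx : x ∈ S, H.Reachable ⟨a₀, ha₀⟩ ⟨x, hx⟩) (fun e he => ?_)
      a₀ ha₀ b b.2 ⟨ha₀, .rfl⟩).2
    obtain ⟨h₁, h₂⟩ := Finset.mem_product.1 (hT he)
    by_cases hne : e.1 = e.2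
    · rw [hne]
    have hadj : H.Adj ⟨e.1, h₁⟩ ⟨e.2, h₂⟩ :=
      (SimpleGraph.fromRel_adj _ _ _).2 ⟨fun h => hne (congrArg Subtype.val h), Or.inl he⟩
    exact ⟨fun ⟨_, h⟩ => ⟨h₂, h.trans hadj.reachable⟩,
      fun ⟨_, h⟩ => ⟨h₁, h.trans hadj.symm.reachable⟩⟩
  have hE : H.edgeSet ⊆ Set.range fun e : T =>
      s(⟨e.1.1, (Finset.mem_product.1 (hT e.2)).1⟩,
        ⟨e.1.2, (Finset.mem_product.1 (hT e.2)).2⟩) := by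
    refine Sym2.ind fun a b hab => ?_
    rcases ((SimpleGraph.fromRel_adj _ _ _).1 (H.mem_edgeSet.1 hab)).2 with h | h
    · exact ⟨⟨(a.1, b.1), h⟩, rfl⟩
    · exact ⟨⟨(b.1, a.1), h⟩, Sym2.eq_swap⟩
  calc S.card = Nat.card S := (Nat.card_eq_finsetCard S).symm
    _ ≤ Nat.card H.edgeSet + 1 := hH.card_vert_le_card_edgeSet_add_one
    _ ≤ Nat.card T + 1 := by
      gcongr
      exact (Nat.card_mono (Set.finite_range _) hE).trans (Finite.card_range_le _)
    _ = T.card + 1 := by rw [Nat.card_eq_finsetCard]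

-- `m` is a parameter of the type only so that the multiplication below can depend on it.
inductive PairSemigroup (E D : Type) (_m : E → E → Option D) : Type
  | letter (x : E)
  | pair (d : Option D)

instance {E D : Type} {m : E → E → Option D} : Semigroup (PairSemigroup E D m) where
  mul
    | .letter x, .letter y => .pair (m x y)
    | _, _ => .pair none
  mul_assoc a b c := by cases a <;> cases b <;> cases c <;> rfl

namespace OrientedGraph

variable {G : OrientedGraph}

theorem isPath_nil {u v : G.V} : G.IsPath [] u v ↔ u = v := by
  change List.IsChain _ [] ∧ _ ↔ _
  simp

theorem isPath_cons {e : G.E} {p : List G.E} {u v : G.V} :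
    G.IsPath (e :: p) u v ↔ u = G.o e ∧ G.IsPath p (G.t e) v := by
  change List.IsChain _ _ ∧ _ ↔ _ ∧ List.IsChain _ _ ∧ _
  cases p with
  | nil => simp [eq_comm]
  | cons f p => simp [List.isChain_cons_cons]; tauto

theorem isPath_singleton (e : G.E) : G.IsPath [e] (G.o e) (G.t e) := by
  simp [isPath_cons, isPath_nil]

theorem isPath_pair {x y : G.E} {u v : G.V} :
    G.IsPath [x, y] u v ↔ u = G.o x ∧ G.t x = G.o y ∧ G.t y = v := by
  simp [isPath_cons, isPath_nil]

variable (G) in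
open Classical in
noncomputable def dropLoops (s : List G.E) : List G.E :=
  s.filter fun e => G.o e ≠ G.t e

theorem mem_dropLoops {s : List G.E} {e : G.E} :
    e ∈ G.dropLoops s ↔ e ∈ s ∧ G.o e ≠ G.t e := by
  simp [dropLoops]

theorem dropLoops_eq_nil {s : List G.E} (hs : ∀ e ∈ s, G.o e = G.t e) : G.dropLoops s = [] := by
  simpa [dropLoops] using hs

theorem dropLoops_cons_of_loop {e : G.E} (s : List G.E) (he : G.o e = G.t e) :
    G.dropLoops (e :: s) = G.dropLoops s := by
  simp [dropLoops, he]

theorem dropLoops_cons_of_ne {e : G.E} (s : List G.E) (he : G.o e ≠ G.t e) :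
    G.dropLoops (e :: s) = e :: G.dropLoops s := by
  simp [dropLoops, he]

theorem IsPath.dropLoops {p : List G.E} {u v : G.V} (h : G.IsPath p u v) :
    G.IsPath (G.dropLoops p) u v := by
  induction p generalizing u with
  | nil => exact h
  | cons e p ih =>
    obtain ⟨rfl, hp⟩ := isPath_cons.1 h
    by_cases he : G.o e = G.t e
    · rw [dropLoops_cons_of_loop p he, he]
      exact ih hp
    · rw [dropLoops_cons_of_ne p he, isPath_cons]
      exact ⟨rfl, ih hp⟩

theorem labelProd_dropLoops {M : Type} [Monoid M] {l : G.E → M}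
    (hl : ∀ e, G.o e = G.t e → l e = 1) (s : List G.E) :
    G.labelProd l (G.dropLoops s) = G.labelProd l s := by
  induction s with
  | nil => rfl
  | cons e s ih =>
    by_cases he : G.o e = G.t e
    · rw [dropLoops_cons_of_loop s he, ih]
      simp [labelProd, hl e he]
    · rw [dropLoops_cons_of_ne s he]
      simp only [labelProd, List.map_cons, List.prod_cons] at ih ⊢
      rw [ih]

variable (G) in
open Classical in
noncomputable def twoPaths (u v : G.V) : Finset (G.E × G.E) :=
  {q | G.t q.1 = G.o q.2 ∧ G.o q.1 = u ∧ G.t q.2 = v ∧ G.o q.1 ≠ G.t q.1 ∧ G.o q.2 ≠ G.t q.2}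

@[simp]
theorem mem_twoPaths {u v : G.V} {q : G.E × G.E} :
    q ∈ G.twoPaths u v ↔
      G.t q.1 = G.o q.2 ∧ G.o q.1 = u ∧ G.t q.2 = v ∧ G.o q.1 ≠ G.t q.1 ∧ G.o q.2 ≠ G.t q.2 := by
  simp [twoPaths]

theorem eq_nil_of_isPath_self (hqa : G.QuasiAcyclic) {p : List G.E} {u : G.V}
    (hp : G.IsPath p u u) (hl : ∀ e ∈ p, G.o e ≠ G.t e) : p = [] := by
  cases p with
  | nil => rfl
  | cons x p =>
    obtain ⟨rfl, hp⟩ := isPath_cons.1 hp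
    exact (hqa _ _ (hl x (by simp)) [x] p (isPath_singleton x) hp).elim

theorem IsPath.eq_singleton_or_mem_twoPaths (hpb : G.TwoPathBounded) {p : List G.E}
    {u v : G.V} (hp : G.IsPath p u v) (hl : ∀ e ∈ p, G.o e ≠ G.t e) (huv : u ≠ v) :
    (∃ x, p = [x]) ∨ ∃ q ∈ G.twoPaths u v, p = [q.1, q.2] := by
  match p, hpb p u v hp hl with
  | [], _ => exact (huv (isPath_nil.1 hp)).elim
  | [x], _ => exact Or.inl ⟨x, rfl⟩
  | [x, y], _ =>
    obtain ⟨rfl, hxy, rfl⟩ := isPath_pair.1 hp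
    exact Or.inr ⟨(x, y), by simp_all, rfl⟩

theorem IsPath.eq_singleton (hpb : G.TwoPathBounded) (hme : ¬ G.HasMultipleEdges)
    (htr : ¬ G.HasTriangle) {p : List G.E} {x : G.E} {u v : G.V} (hp : G.IsPath p u v)
    (hx : G.IsPath [x] u v) (hl : ∀ e ∈ p, G.o e ≠ G.t e) (hxl : G.o x ≠ G.t x) : p = [x] := by
  obtain ⟨rfl, rfl⟩ : u = G.o x ∧ G.t x = v := by simpa [isPath_cons, isPath_nil] using hx
  rcases hp.eq_singleton_or_mem_twoPaths hpb hl hxl with ⟨z, rfl⟩ | ⟨q, hq, rfl⟩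
  · obtain ⟨hz, hzt⟩ : G.o x = G.o z ∧ G.t z = G.t x := by
      simpa [isPath_cons, isPath_nil] using hp
    by_contra hzx
    exact hme ⟨x, z, fun h => hzx (by rw [h]), hzt.symm, hz, Ne.symm hxl⟩
  · simp only [mem_twoPaths] at hq
    exact (htr ⟨x, q.1, q.2, hq.2.1.symm, hq.1, hq.2.2.1, hxl, hq.2.2.2⟩).elim

theorem IsPath.eq_or_mem_twoPaths (hqa : G.QuasiAcyclic) (hpb : G.TwoPathBounded)
    (hme : ¬ G.HasMultipleEdges) (htr : ¬ G.HasTriangle) {p₁ p₂ : List G.E} {u v : G.V}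
    (h₁ : G.IsPath p₁ u v) (h₂ : G.IsPath p₂ u v)
    (hl₁ : ∀ e ∈ p₁, G.o e ≠ G.t e) (hl₂ : ∀ e ∈ p₂, G.o e ≠ G.t e) :
    p₁ = p₂ ∨ ∃ q₁ ∈ G.twoPaths u v, ∃ q₂ ∈ G.twoPaths u v,
      p₁ = [q₁.1, q₁.2] ∧ p₂ = [q₂.1, q₂.2] := by
  by_cases huv : u = v
  · subst huv
    exact Or.inl ((eq_nil_of_isPath_self hqa h₁ hl₁).trans (eq_nil_of_isPath_self hqa h₂ hl₂).symm)
  rcases h₁.eq_singleton_or_mem_twoPaths hpb hl₁ huv with ⟨x, rfl⟩ | ⟨q₁, hq₁, rfl⟩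
  · exact Or.inl (h₂.eq_singleton hpb hme htr h₁ hl₂ (hl₁ x (by simp))).symm
  rcases h₂.eq_singleton_or_mem_twoPaths hpb hl₂ huv with ⟨z, rfl⟩ | ⟨q₂, hq₂, rfl⟩
  · exact Or.inl (h₁.eq_singleton hpb hme htr h₂ hl₁ (hl₂ z (by simp)))
  · exact Or.inr ⟨q₁, hq₁, q₂, hq₂, rfl, rfl⟩

theorem isCommutative_iff (hqa : G.QuasiAcyclic) (hpb : G.TwoPathBounded)
    (hme : ¬ G.HasMultipleEdges) (htr : ¬ G.HasTriangle) {M : Type} [Monoid M]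
    {l : G.E → M} :
    G.IsCommutative l ↔ (∀ e, G.o e = G.t e → l e = 1) ∧
      ∀ u v, ∀ q₁ ∈ G.twoPaths u v, ∀ q₂ ∈ G.twoPaths u v, l q₁.1 * l q₁.2 = l q₂.1 * l q₂.2 := by
  constructor
  · intro hl
    refine ⟨fun e he => ?_, fun u v q₁ hq₁ q₂ hq₂ => ?_⟩
    · have hpath : G.IsPath [e] (G.o e) (G.o e) := by rw [isPath_cons, isPath_nil]; simp [he]
      simpa [labelProd] using hl _ _ _ _ hpath (isPath_nil.2 rfl)
    · simp only [mem_twoPaths] at hq₁ hq₂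
      simpa [labelProd] using hl u v [q₁.1, q₁.2] [q₂.1, q₂.2]
        (isPath_pair.2 ⟨hq₁.2.1.symm, hq₁.1, hq₁.2.2.1⟩)
        (isPath_pair.2 ⟨hq₂.2.1.symm, hq₂.1, hq₂.2.2.1⟩)
  · rintro ⟨hloop, htwo⟩ u v p₁ p₂ h₁ h₂
    rw [← labelProd_dropLoops hloop p₁, ← labelProd_dropLoops hloop p₂]
    rcases h₁.dropLoops.eq_or_mem_twoPaths hqa hpb hme htr h₂.dropLoops
      (fun e he => (mem_dropLoops.1 he).2) (fun e he => (mem_dropLoops.1 he).2) with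
      h | ⟨q₁, hq₁, q₂, hq₂, e₁, e₂⟩
    · rw [h]
    · simpa [e₁, e₂, labelProd] using htwo u v q₁ hq₁ q₂ hq₂

variable (G) in
open Classical in
noncomputable def basicRelations : Finset (List G.E × List G.E) :=
  ({e | G.o e = G.t e} : Finset G.E).image (fun e => ([e], [])) ∪
    ({q | ∃ u v, q.1 ∈ G.twoPaths u v ∧ q.2 ∈ G.twoPaths u v} :
      Finset ((G.E × G.E) × (G.E × G.E))).image fun q => ([q.1.1, q.1.2], [q.2.1, q.2.2])

theorem isComplete_basicRelations (hqa : G.QuasiAcyclic) (hpb : G.TwoPathBounded)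
    (hme : ¬ G.HasMultipleEdges) (htr : ¬ G.HasTriangle) : G.IsComplete G.basicRelations := by
  classical
  intro M _ l
  rw [isCommutative_iff hqa hpb hme htr]
  constructor
  · rintro ⟨hloop, htwo⟩ r hr
    simp only [basicRelations, Finset.mem_union, Finset.mem_image, Finset.mem_filter,
      Finset.mem_univ, true_and] at hr
    rcases hr with ⟨e, he, rfl⟩ | ⟨q, ⟨u, v, hq₁, hq₂⟩, rfl⟩
    · simp [labelProd, hloop e he]
    · simpa [labelProd] using htwo u v _ hq₁ _ hq₂
  · intro h
    refine ⟨fun e he => ?_, fun u v q₁ hq₁ q₂ hq₂ => ?_⟩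
    · simpa [labelProd] using h ([e], [])
        (Finset.mem_union_left _ (Finset.mem_image_of_mem _ (by simpa using he)))
    · simpa [labelProd] using h ([q₁.1, q₁.2], [q₂.1, q₂.2])
        (Finset.mem_union_right _ (Finset.mem_image.2
          ⟨(q₁, q₂), Finset.mem_filter.2 ⟨Finset.mem_univ _, u, v, hq₁, hq₂⟩, rfl⟩))

theorem exists_isComplete_card_eq_eta (hqa : G.QuasiAcyclic) (hpb : G.TwoPathBounded)
    (hme : ¬ G.HasMultipleEdges) (htr : ¬ G.HasTriangle) :
    ∃ R, G.IsComplete R ∧ R.card = G.eta :=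
  Nat.sInf_mem (s := {n | ∃ R, G.IsComplete R ∧ R.card = n})
    ⟨_, G.basicRelations, isComplete_basicRelations hqa hpb hme htr, rfl⟩

variable (G) in
theorem exists_rhomboids_card_eq_rhNum :
    ∃ F : Finset (G.E × G.E × G.E × G.E), (∀ ρ ∈ F, G.IsRhomboid ρ) ∧
      (∀ ρ ∈ F, ∀ ρ' ∈ F, ρ ≠ ρ' → G.RhDisjoint ρ ρ') ∧ F.card = G.rhNum := by
  refine Nat.sSup_mem (s := {n | ∃ F : Finset (G.E × G.E × G.E × G.E),
    (∀ ρ ∈ F, G.IsRhomboid ρ) ∧ (∀ ρ ∈ F, ∀ ρ' ∈ F, ρ ≠ ρ' → G.RhDisjoint ρ ρ') ∧ F.card = n})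
    ⟨0, ∅, by simp, by simp, rfl⟩ ⟨Fintype.card (G.E × G.E × G.E × G.E), ?_⟩
  rintro _ ⟨F, -, -, rfl⟩
  exact F.card_le_univ

variable (G) in
open Classical in
noncomputable def loopLabel (w : G.E → ℚ) : G.E → WithZero (Multiplicative ℚ) :=
  fun e => if G.o e = G.t e then ↑(Multiplicative.ofAdd (w e)) else 0

theorem labelProd_loopLabel_of_forall_loop (w : G.E → ℚ) {s : List G.E}
    (hs : ∀ e ∈ s, G.o e = G.t e) :
    G.labelProd (G.loopLabel w) s = ↑(Multiplicative.ofAdd (s.map w).sum) := by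
  induction s with
  | nil => rfl
  | cons e s ih =>
    simp only [List.forall_mem_cons] at hs
    have := ih hs.2
    simp only [labelProd, List.map_cons, List.prod_cons, List.sum_cons] at this ⊢
    rw [this, loopLabel, if_pos hs.1, ofAdd_add, WithZero.coe_mul]

theorem labelProd_loopLabel_of_mem (w : G.E → ℚ) {s : List G.E} {e : G.E} (he : e ∈ s)
    (hne : G.o e ≠ G.t e) : G.labelProd (G.loopLabel w) s = 0 :=
  List.prod_eq_zero (List.mem_map.2 ⟨e, he, by simp [loopLabel, hne]⟩)

theorem isCommutative_loopLabel_iff (hqa : G.QuasiAcyclic) (hpb : G.TwoPathBounded)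
    (hme : ¬ G.HasMultipleEdges) (htr : ¬ G.HasTriangle) (w : G.E → ℚ) :
    G.IsCommutative (G.loopLabel w) ↔ ∀ e, G.o e = G.t e → w e = 0 := by
  rw [isCommutative_iff hqa hpb hme htr]
  simp +contextual [loopLabel, ← WithZero.coe_one, WithZero.coe_inj]

theorem allLoops_or_bothSidesNonLoop (hqa : G.QuasiAcyclic) (hpb : G.TwoPathBounded)
    (hme : ¬ G.HasMultipleEdges) (htr : ¬ G.HasTriangle) {R : Finset (List G.E × List G.E)}
    (hR : G.IsComplete R) {r : List G.E × List G.E} (hr : r ∈ R) :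
    G.AllLoops r ∨ G.BothSidesNonLoop r := by
  have hrel := (hR _ _).1 ((isCommutative_loopLabel_iff hqa hpb hme htr 0).2 fun _ _ => rfl) r hr
  -- under `loopLabel 0` a side is `0` or `1` according as it contains a non-loop or not
  have key : ∀ s s' : List G.E, G.labelProd (G.loopLabel 0) s = G.labelProd (G.loopLabel 0) s' →
      (∃ e ∈ s, G.o e ≠ G.t e) → ∃ e ∈ s', G.o e ≠ G.t e := by
    rintro s s' h ⟨e, he, hne⟩
    by_contra! h'
    rw [labelProd_loopLabel_of_mem 0 he hne, labelProd_loopLabel_of_forall_loop 0 h'] at h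
    exact WithZero.zero_ne_coe h
  by_cases h₁ : ∃ e ∈ r.1, G.o e ≠ G.t e
  · exact Or.inr ⟨h₁, key _ _ hrel h₁⟩
  · push Not at h₁
    refine Or.inl ⟨h₁, fun e he => ?_⟩
    by_contra hne
    obtain ⟨e', he', hne'⟩ := key _ _ hrel.symm ⟨e, he, hne⟩
    exact hne' (h₁ e' he')

open Classical in
theorem loopCount_le_card_filter_allLoops (hqa : G.QuasiAcyclic) (hpb : G.TwoPathBounded)
    (hme : ¬ G.HasMultipleEdges) (htr : ¬ G.HasTriangle) {R : Finset (List G.E × List G.E)}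
    (hR : G.IsComplete R) : G.loopCount ≤ (R.filter G.AllLoops).card := by
  set RL := R.filter G.AllLoops
  let L := {e : G.E // G.o e = G.t e}
  let ext : (L → ℚ) →ₗ[ℚ] G.E → ℚ := Function.ExtendByZero.linearMap ℚ Subtype.val
  let weightDiff : (G.E → ℚ) →ₗ[ℚ] RL → ℚ :=
    { toFun := fun w r => (r.1.1.map w).sum - (r.1.2.map w).sum
      map_add' := fun w w' => by ext r; simp [Pi.add_def, List.sum_map_add]; ring
      map_smul' := fun c w => by ext r; simp [Pi.smul_def, List.sum_map_mul_left]; ring }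
  let Φ := weightDiff ∘ₗ ext
  have hΦ : Function.Injective Φ := by
    rw [← LinearMap.ker_eq_bot, LinearMap.ker_eq_bot']
    intro v hv
    have hrel : ∀ r ∈ R, G.labelProd (G.loopLabel (ext v)) r.1 =
        G.labelProd (G.loopLabel (ext v)) r.2 := by
      intro r hr
      rcases allLoops_or_bothSidesNonLoop hqa hpb hme htr hR hr with
        h | ⟨⟨e, he, hne⟩, ⟨e', he', hne'⟩⟩
      · rw [labelProd_loopLabel_of_forall_loop _ h.1, labelProd_loopLabel_of_forall_loop _ h.2,
          sub_eq_zero.1 (congrFun hv ⟨r, Finset.mem_filter.2 ⟨hr, h⟩⟩)]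
      · rw [labelProd_loopLabel_of_mem _ he hne, labelProd_loopLabel_of_mem _ he' hne']
    have h0 := (isCommutative_loopLabel_iff hqa hpb hme htr _).1 ((hR _ _).2 hrel)
    funext e
    simpa [ext, Subtype.val_injective.extend_apply] using h0 e e.2
  calc G.loopCount = Module.finrank ℚ (L → ℚ) := by simp [loopCount, L, Nat.card_eq_fintype_card]
    _ ≤ Module.finrank ℚ (RL → ℚ) := LinearMap.finrank_le_finrank_of_injective hΦ
    _ = RL.card := by simp

variable (G) in
open Classical in
abbrev PairMonoid {D : Type} (c : G.E × G.E → D) : Type :=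
  WithOne (PairSemigroup G.E D fun x y => if G.t x = G.o y then some (c (x, y)) else none)

variable (G) in
open Classical in
noncomputable def pairLabel {D : Type} (c : G.E × G.E → D) (e : G.E) : G.PairMonoid c :=
  if G.o e = G.t e then 1 else WithOne.coe (.letter e)

variable (G) in
open Classical in
noncomputable def wordVal {D : Type} (c : G.E × G.E → D) : List G.E → G.PairMonoid c
  | [] => 1
  | [x] => WithOne.coe (.letter x)
  | [x, y] => WithOne.coe (.pair (if G.t x = G.o y then some (c (x, y)) else none))
  | _ :: _ :: _ :: _ => WithOne.coe (.pair none)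

theorem pairLabel_of_loop {D : Type} (c : G.E × G.E → D) {e : G.E} (he : G.o e = G.t e) :
    G.pairLabel c e = 1 :=
  if_pos he

theorem pairLabel_of_ne {D : Type} (c : G.E × G.E → D) {e : G.E} (he : G.o e ≠ G.t e) :
    G.pairLabel c e = WithOne.coe (.letter e) :=
  if_neg he

theorem labelProd_pairLabel {D : Type} (c : G.E × G.E → D) (s : List G.E) :
    G.labelProd (G.pairLabel c) s = G.wordVal c (G.dropLoops s) := by
  rw [← labelProd_dropLoops fun e => pairLabel_of_loop c]
  have hl : ∀ e ∈ G.dropLoops s, G.o e ≠ G.t e := fun e he => (mem_dropLoops.1 he).2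
  generalize G.dropLoops s = s at hl
  match s with
  | [] => rfl
  | [x] => simp [labelProd, pairLabel_of_ne c (hl x (by simp)), wordVal]
  | [x, y] =>
    simp [labelProd, pairLabel_of_ne c (hl x (by simp)), pairLabel_of_ne c (hl y (by simp)),
      wordVal]
    rfl
  | x :: y :: z :: s =>
    simp only [labelProd, List.map_cons, wordVal, pairLabel_of_ne c (hl x (by simp)),
      pairLabel_of_ne c (hl y (by simp)), pairLabel_of_ne c (hl z (by simp))]
    rw [List.prod_cons, List.prod_cons, List.prod_cons]
    generalize (s.map (G.pairLabel c)).prod = p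
    rcases p with _ | p | p <;> rfl

theorem wordVal_eq_of_wordVal_eq {D D' : Type} {c : G.E × G.E → D} {c' : G.E × G.E → D'}
    {s s' : List G.E} (h : G.wordVal c s = G.wordVal c s')
    (hpair : ∀ x y z w, s = [x, y] → s' = [z, w] → G.t x = G.o y → G.t z = G.o w →
      c (x, y) = c (z, w) → c' (x, y) = c' (z, w)) :
    G.wordVal c' s = G.wordVal c' s' := by
  rcases s with _ | ⟨x, _ | ⟨y, _ | ⟨_, _⟩⟩⟩ <;> rcases s' with _ | ⟨z, _ | ⟨w, _ | ⟨_, _⟩⟩⟩ <;>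
    simp_all [wordVal]
  split_ifs at h ⊢ with hxy hzw <;> simp_all
  exact hpair x y z w rfl rfl rfl rfl hxy hzw h

theorem isCommutative_pairLabel_iff (hqa : G.QuasiAcyclic) (hpb : G.TwoPathBounded)
    (hme : ¬ G.HasMultipleEdges) (htr : ¬ G.HasTriangle) {D : Type} (c : G.E × G.E → D) :
    G.IsCommutative (G.pairLabel c) ↔
      ∀ u v, ∀ q₁ ∈ G.twoPaths u v, ∀ q₂ ∈ G.twoPaths u v, c q₁ = c q₂ := by
  have hmul : ∀ u v, ∀ q ∈ G.twoPaths u v,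
      G.pairLabel c q.1 * G.pairLabel c q.2 = WithOne.coe (.pair (some (c q))) := by
    intro u v q hq
    obtain ⟨hqt, -, -, hq₁, hq₂⟩ := mem_twoPaths.1 hq
    rw [pairLabel_of_ne c hq₁, pairLabel_of_ne c hq₂, ← WithOne.coe_mul]
    exact congrArg (WithOne.coe ∘ PairSemigroup.pair) (if_pos hqt)
  rw [isCommutative_iff hqa hpb hme htr]
  refine ⟨fun h u v q₁ hq₁ q₂ hq₂ => ?_, fun h => ⟨fun e => pairLabel_of_loop c, ?_⟩⟩
  · simpa [hmul u v q₁ hq₁, hmul u v q₂ hq₂] using h.2 u v q₁ hq₁ q₂ hq₂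
  · intro u v q₁ hq₁ q₂ hq₂
    rw [hmul u v q₁ hq₁, hmul u v q₂ hq₂, h u v q₁ hq₁ q₂ hq₂]

theorem isCommutative_pairLabel_of_forall (hqa : G.QuasiAcyclic) (hpb : G.TwoPathBounded)
    (hme : ¬ G.HasMultipleEdges) (htr : ¬ G.HasTriangle) {R : Finset (List G.E × List G.E)}
    (hR : G.IsComplete R) {D : Type} (c : G.E × G.E → D)
    (hc : ∀ r ∈ R, ∀ u v, ∀ q₁ ∈ G.twoPaths u v, ∀ q₂ ∈ G.twoPaths u v,
      G.dropLoops r.1 = [q₁.1, q₁.2] → G.dropLoops r.2 = [q₂.1, q₂.2] → c q₁ = c q₂) :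
    G.IsCommutative (G.pairLabel c) := by
  let ends (q : G.E × G.E) : G.V × G.V := (G.o q.1, G.t q.2)
  have hends : G.IsCommutative (G.pairLabel ends) :=
    (isCommutative_pairLabel_iff hqa hpb hme htr ends).2 fun u v q₁ hq₁ q₂ hq₂ => by
      simp only [mem_twoPaths] at hq₁ hq₂
      simp [ends, hq₁.2.1, hq₁.2.2.1, hq₂.2.1, hq₂.2.2.1]
  -- Every relation of `R` holds for the colouring by end vertices, so it equates two words of
  -- equal value or two paths of length two with the same ends; the refinement by `c` keeps it.
  have hrefined : G.IsCommutative (G.pairLabel fun q => (ends q, c q)) := by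
    refine (hR _ _).2 fun r hr => ?_
    have h := (hR _ _).1 hends r hr
    simp only [labelProd_pairLabel] at h ⊢
    refine wordVal_eq_of_wordVal_eq h fun x y z w e₁ e₂ hxy hzw hxyzw => ?_
    have hl₁ := fun e he => (mem_dropLoops (s := r.1) (e := e)).1 (e₁ ▸ he) |>.2
    have hl₂ := fun e he => (mem_dropLoops (s := r.2) (e := e)).1 (e₂ ▸ he) |>.2
    simp only [ends, Prod.mk.injEq] at hxyzw
    refine Prod.ext (by simp [ends, hxyzw]) (hc r hr (G.o x) (G.t y) _ ?_ _ ?_ e₁ e₂)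
    · exact mem_twoPaths.2 ⟨hxy, rfl, rfl, hl₁ x (by simp), hl₁ y (by simp)⟩
    · exact mem_twoPaths.2 ⟨hzw, hxyzw.1.symm, hxyzw.2.symm, hl₂ z (by simp), hl₂ w (by simp)⟩
  rw [isCommutative_pairLabel_iff hqa hpb hme htr] at hrefined ⊢
  exact fun u v q₁ hq₁ q₂ hq₂ => congrArg Prod.snd (hrefined u v q₁ hq₁ q₂ hq₂)

theorem mem_twoPaths_iff_of_mem {u v u' v' : G.V} {q₁ q₂ : G.E × G.E}
    (hq₁ : q₁ ∈ G.twoPaths u' v') (hq₂ : q₂ ∈ G.twoPaths u' v') :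
    q₁ ∈ G.twoPaths u v ↔ q₂ ∈ G.twoPaths u v := by
  simp only [mem_twoPaths] at *
  grind

variable (G) in
def IsTwoPathRelation (u v : G.V) (r : List G.E × List G.E) : Prop :=
  ∃ q₁ ∈ G.twoPaths u v, ∃ q₂ ∈ G.twoPaths u v,
    G.dropLoops r.1 = [q₁.1, q₁.2] ∧ G.dropLoops r.2 = [q₂.1, q₂.2]

open Classical in
theorem card_twoPaths_le (hqa : G.QuasiAcyclic) (hpb : G.TwoPathBounded)
    (hme : ¬ G.HasMultipleEdges) (htr : ¬ G.HasTriangle) {R : Finset (List G.E × List G.E)}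
    (hR : G.IsComplete R) (u v : G.V) :
    (G.twoPaths u v).card ≤ (R.filter (G.IsTwoPathRelation u v)).card + 1 := by
  set S := G.twoPaths u v
  let Joins (q : (G.E × G.E) × (G.E × G.E)) (r : List G.E × List G.E) : Prop :=
    G.dropLoops r.1 = [q.1.1, q.1.2] ∧ G.dropLoops r.2 = [q.2.1, q.2.2]
  set T := (S ×ˢ S).filter fun q => ∃ r ∈ R, Joins q r
  have hT : T.card ≤ (R.filter (G.IsTwoPathRelation u v)).card := by
    refine Finset.card_le_card_of_forall_subsingleton Joins (fun q hq => ?_) ?_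
    · obtain ⟨hq, r, hr, hj⟩ := Finset.mem_filter.1 hq
      obtain ⟨h₁, h₂⟩ := Finset.mem_product.1 hq
      exact ⟨r, Finset.mem_filter.2 ⟨hr, q.1, h₁, q.2, h₂, hj⟩, hj⟩
    · rintro r - q ⟨-, h₁, h₂⟩ q' ⟨-, h₁', h₂'⟩
      simp_all [Prod.ext_iff]
  refine (Finset.card_le_card_add_one_of_forall_iff (T := T) (Finset.filter_subset _ _)
    fun P hP p hp q hq hPp => ?_).trans (by omega)
  have hc := isCommutative_pairLabel_of_forall hqa hpb hme htr hR (fun q => q ∈ S ∧ P q)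
    fun r hr u' v' q₁ hq₁ q₂ hq₂ e₁ e₂ => by
      have hS := mem_twoPaths_iff_of_mem (u := u) (v := v) hq₁ hq₂
      have hP' (h₁ : q₁ ∈ S) : P q₁ ↔ P q₂ := hP (q₁, q₂) (Finset.mem_filter.2
        ⟨Finset.mem_product.2 ⟨h₁, hS.1 h₁⟩, r, hr, e₁, e₂⟩)
      exact propext ⟨fun h => ⟨hS.1 h.1, (hP' h.1).1 h.2⟩,
        fun h => ⟨hS.2 h.1, (hP' (hS.2 h.1)).2 h.2⟩⟩
  have hpq := (isCommutative_pairLabel_iff hqa hpb hme htr _).1 hc u v p hp q hq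
  exact (cast hpq ⟨hp, hPp⟩).2

theorem IsRhomboid.sides_mem_twoPaths {ρ : G.E × G.E × G.E × G.E} (h : G.IsRhomboid ρ) :
    (ρ.1, ρ.2.1) ∈ G.twoPaths (G.o ρ.1) (G.t ρ.2.1) ∧
      ρ.2.2 ∈ G.twoPaths (G.o ρ.1) (G.t ρ.2.1) ∧ (ρ.1, ρ.2.1) ≠ ρ.2.2 := by
  obtain ⟨h₁, h₂, h₃, h₄, h₅, h₆, h₇, h₈, h₉, h₁₀⟩ := h
  refine ⟨?_, ?_, fun h => h₈ ?_⟩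
  · exact mem_twoPaths.2 ⟨h₃, rfl, rfl, h₅, h₃ ▸ h₂ ▸ h₉⟩
  · exact mem_twoPaths.2 ⟨h₄, h₁.symm, h₂.symm, h₁ ▸ h₄ ▸ h₆, h₁₀⟩
  · rw [← h₄, ← (Prod.ext_iff.1 h).1]

open Classical in
theorem two_mul_card_filter_le_card_twoPaths {F : Finset (G.E × G.E × G.E × G.E)}
    (hF : ∀ ρ ∈ F, G.IsRhomboid ρ) (hdisj : ∀ ρ ∈ F, ∀ ρ' ∈ F, ρ ≠ ρ' → G.RhDisjoint ρ ρ')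
    (u v : G.V) :
    2 * (F.filter fun ρ => (G.o ρ.1, G.t ρ.2.1) = (u, v)).card ≤ (G.twoPaths u v).card := by
  set Fuv := F.filter fun ρ => (G.o ρ.1, G.t ρ.2.1) = (u, v)
  let side (ρb : (G.E × G.E × G.E × G.E) × Bool) : G.E × G.E :=
    if ρb.2 then (ρb.1.1, ρb.1.2.1) else ρb.1.2.2
  have hmaps : ∀ ρb ∈ Fuv ×ˢ (Finset.univ : Finset Bool), side ρb ∈ G.twoPaths u v := by
    rintro ⟨ρ, b⟩ hρ
    obtain ⟨hρF, hρuv⟩ := Finset.mem_filter.1 (Finset.mem_product.1 hρ).1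
    obtain ⟨h₁, h₂, -⟩ := (hF ρ hρF).sides_mem_twoPaths
    simp only [Prod.mk.injEq] at hρuv
    rw [← hρuv.1, ← hρuv.2]
    cases b
    · exact h₂
    · exact h₁
  have hinj : Set.InjOn side ↑(Fuv ×ˢ (Finset.univ : Finset Bool)) := by
    rintro ⟨ρ, b⟩ hρ ⟨ρ', b'⟩ hρ' heq
    have hρF := (Finset.mem_filter.1 (Finset.mem_product.1 (Finset.mem_coe.1 hρ)).1).1
    have hρF' := (Finset.mem_filter.1 (Finset.mem_product.1 (Finset.mem_coe.1 hρ')).1).1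
    by_cases hρρ' : ρ = ρ'
    · subst hρρ'
      have hne := (hF ρ hρF).sides_mem_twoPaths.2.2
      cases b <;> cases b' <;> simp_all [side]
    · obtain ⟨d₁, d₂, d₃, d₄⟩ := hdisj ρ hρF ρ' hρF' hρρ'
      cases b <;> cases b' <;> simp [side, Prod.ext_iff] at heq <;> tauto
  calc 2 * Fuv.card = (Fuv ×ˢ (Finset.univ : Finset Bool)).card := by simp [mul_comm]
    _ ≤ (G.twoPaths u v).card := Finset.card_le_card_of_injOn side hmaps hinj

theorem IsTwoPathRelation.not_allLoops {u v : G.V} {r : List G.E × List G.E}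
    (h : G.IsTwoPathRelation u v r) : ¬ G.AllLoops r := fun hr => by
  obtain ⟨q, -, -, -, h₁, -⟩ := h
  simp [dropLoops_eq_nil hr.1] at h₁

theorem IsTwoPathRelation.unique {u v u' v' : G.V} {r : List G.E × List G.E}
    (h : G.IsTwoPathRelation u v r) (h' : G.IsTwoPathRelation u' v' r) : (u, v) = (u', v') := by
  obtain ⟨q, hq, -, -, e, -⟩ := h
  obtain ⟨q', hq', -, -, e', -⟩ := h'
  obtain ⟨rfl, rfl⟩ : q = q' := by simp_all [Prod.ext_iff]
  simp only [mem_twoPaths] at hq hq'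
  rw [← hq.2.1, ← hq.2.2.1, ← hq'.2.1, ← hq'.2.2.1]

theorem card_add_loopCount_le (hqa : G.QuasiAcyclic) (hpb : G.TwoPathBounded)
    (hme : ¬ G.HasMultipleEdges) (htr : ¬ G.HasTriangle) {R : Finset (List G.E × List G.E)}
    (hR : G.IsComplete R) {F : Finset (G.E × G.E × G.E × G.E)} (hF : ∀ ρ ∈ F, G.IsRhomboid ρ)
    (hdisj : ∀ ρ ∈ F, ∀ ρ' ∈ F, ρ ≠ ρ' → G.RhDisjoint ρ ρ') :
    F.card + G.loopCount ≤ R.card := by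
  classical
  let corner (ρ : G.E × G.E × G.E × G.E) : G.V × G.V := (G.o ρ.1, G.t ρ.2.1)
  let Rc (uv : G.V × G.V) := R.filter (G.IsTwoPathRelation uv.1 uv.2)
  have hclass : ∀ uv, (F.filter fun ρ => corner ρ = uv).card ≤ (Rc uv).card := by
    rintro ⟨u, v⟩
    have h₁ : 2 * (F.filter fun ρ => corner ρ = (u, v)).card ≤ (G.twoPaths u v).card :=
      two_mul_card_filter_le_card_twoPaths hF hdisj u v
    have h₂ : (G.twoPaths u v).card ≤ (Rc (u, v)).card + 1 :=
      card_twoPaths_le hqa hpb hme htr hR u v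
    omega
  have hRc : (Set.univ : Set (G.V × G.V)).PairwiseDisjoint Rc := by
    intro uv _ uv' _ hne
    refine Finset.disjoint_left.2 fun r hr hr' => hne ?_
    exact (Finset.mem_filter.1 hr).2.unique (Finset.mem_filter.1 hr').2
  have hsub : Finset.univ.biUnion Rc ⊆ R.filter fun r => ¬ G.AllLoops r := by
    intro r hr
    obtain ⟨uv, -, hr⟩ := Finset.mem_biUnion.1 hr
    obtain ⟨hrR, hr⟩ := Finset.mem_filter.1 hr
    exact Finset.mem_filter.2 ⟨hrR, hr.not_allLoops⟩
  calc F.card + G.loopCount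
      = ∑ uv, (F.filter fun ρ => corner ρ = uv).card + G.loopCount := by
        rw [Finset.card_eq_sum_card_fiberwise fun ρ _ => Finset.mem_univ (corner ρ)]
    _ ≤ ∑ uv, (Rc uv).card + (R.filter G.AllLoops).card :=
        add_le_add (Finset.sum_le_sum fun uv _ => hclass uv)
          (loopCount_le_card_filter_allLoops hqa hpb hme htr hR)
    _ = (Finset.univ.biUnion Rc).card + (R.filter G.AllLoops).card := by
        rw [Finset.card_biUnion (by simpa using hRc)]
    _ ≤ (R.filter fun r => ¬ G.AllLoops r).card + (R.filter G.AllLoops).card := by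
        gcongr
    _ = R.card := by
        rw [add_comm]
        exact Finset.card_filter_add_card_filter_not _

end OrientedGraph

/-- Theorem: if `G` is quasi-acyclic, 2-path-bounded, without multiple edges and
triangles, then `η(G) ≥ 𝔯𝔥(G) + 𝔏(G)`. -/
theorem eta_ge_rhNum_add_loopCount (G : OrientedGraph) (hqa : G.QuasiAcyclic)
    (hpb : G.TwoPathBounded) (hme : ¬ G.HasMultipleEdges) (htr : ¬ G.HasTriangle) :
    G.rhNum + G.loopCount ≤ G.eta := by
  obtain ⟨R, hR, hReta⟩ := G.exists_isComplete_card_eq_eta hqa hpb hme htr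
  obtain ⟨F, hF, hdisj, hFrh⟩ := G.exists_rhomboids_card_eq_rhNum
  rw [← hReta, ← hFrh]
  exact G.card_add_loopCount_le hqa hpb hme htr hR hF hdisj
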